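/- arXiv:1905.10041 — 3 statements merged into one kernel-verified Lean document; each statement's English description precedes it below -/
import Mathlib

section
/- Let σ > 0, suppose k(x,y) = ⟨φ(x), φ(y)⟩ ≤ 1 for all x, y ∈ X, let f(x) = ⟨w, φ(x)⟩ for some w ∈ H, set C₁ = 8 / log(1 + σ⁻²), and let x* ∈ X satisfy f(x*) ≥ f(x) for all x ∈ X. Suppose points x₁, …, x_T ∈ X are chosen so that x*, x₁, …, x_T are pairwise distinct and for every t ∈ {1,…,T}, x_t maximizes m̂_{t−1}(x) + ‖w‖·σ̂_{t−1}(x) over x ∈ X, where m̂ and σ̂ are computed from the (noise-free) observations f(x₁),…,f(x_{t−1}) with regularization σ²I. If γ ∈ ℝ satisfies (1/2)·log det(I_T + σ⁻² K_T) ≤ γ, where K_T is the Gram matrix of the selected points, then Σ_{t=1}^T (f(x*) − f(x_t)) ≤ ‖w‖·√(T·C₁·γ) + 2T·‖w‖·σ, and f(x*) − max_{1≤t≤T} f(x_t) ≤ ‖w‖·√(C₁·γ/T) + 2·‖w‖·σ. -/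
open scoped RealInnerProductSpace
open Matrix

noncomputable section

variable {X : Type*} {H : Type*} {H' : Type*}
  [NormedAddCommGroup H] [InnerProductSpace ℝ H]
  [NormedAddCommGroup H'] [InnerProductSpace ℝ H']

/-- The kernel associated with the feature map `φ`: `k(x,y) = ⟪φ(x), φ(y)⟫`. -/
def ker (φ : X → H) (x y : X) : ℝ := ⟪φ x, φ y⟫

/-- Gram matrix of the points `xs`. -/
def gram (φ : X → H) {t : ℕ} (xs : Fin t → X) : Matrix (Fin t) (Fin t) ℝ :=
  Matrix.of fun i j => ker φ (xs i) (xs j)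

/-- The vector `k_t(a) = (k(a,x₁),…,k(a,x_t))ᵀ`. -/
def kvec (φ : X → H) {t : ℕ} (xs : Fin t → X) (a : X) : Fin t → ℝ :=
  fun i => ker φ a (xs i)

/-- Regularized mean prediction `m̂_t(a) = k_t(a)ᵀ (K_t + σ²I)⁻¹ (h(x₁),…,h(x_t))ᵀ`. -/
def rmeanFn (σ : ℝ) (φ : X → H) (hfun : X → ℝ) {t : ℕ} (xs : Fin t → X) (a : X) : ℝ :=
  kvec φ xs a ⬝ᵥ ((gram φ xs + σ ^ 2 • 1)⁻¹ *ᵥ (fun i => hfun (xs i)))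

/-- Regularized variance `σ̂_t²(a) = k(a,a) − k_t(a)ᵀ (K_t + σ²I)⁻¹ k_t(a)`. -/
def rvarFn (σ : ℝ) (φ : X → H) {t : ℕ} (xs : Fin t → X) (a : X) : ℝ :=
  ker φ a a - kvec φ xs a ⬝ᵥ ((gram φ xs + σ ^ 2 • 1)⁻¹ *ᵥ kvec φ xs a)

/-- `σ̂_t(a) = √(σ̂_t²(a))`. -/
def rsigmaFn (σ : ℝ) (φ : X → H) {t : ℕ} (xs : Fin t → X) (a : X) : ℝ :=
  Real.sqrt (rvarFn σ φ xs a)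

/-- The first `t` points of the sequence `x` (0-indexed: indices `< t`). -/
def prevPts {T : ℕ} (x : Fin T → X) (t : Fin T) : Fin t.val → X :=
  fun j => x ⟨j.val, j.isLt.trans t.isLt⟩


/-!
With `α = (K_t + σ²I)⁻¹ k_t(a)` one has `m̂_t(a) = ⟪w, ∑ αᵢ φ(xᵢ)⟫` and
`σ̂_t²(a) = ‖φ(a) - ∑ αᵢ φ(xᵢ)‖² + σ²‖α‖²`, so `|f(a) - m̂_t(a)| ≤ ‖w‖ σ̂_t(a)`; since `x_t`
maximizes the upper confidence bound, `f(x*) - f(x_t) ≤ 2‖w‖ σ̂_{t-1}(x_t)`.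
The Schur complement of the newest point in `K_t + σ²I` is `σ² + σ̂_{t-1}²(x_t)`, hence
`det(I + σ⁻² K_T) = ∏ₜ (1 + σ⁻² σ̂_{t-1}²(x_t))`. As `σ̂² ≤ k ≤ 1`, Bernoulli's inequality gives
`σ̂² log(1 + σ⁻²) ≤ log(1 + σ⁻² σ̂²)`, so `∑ₜ σ̂_{t-1}²(x_t) ≤ 2γ / log(1 + σ⁻²)`, and
Cauchy–Schwarz bounds `∑ₜ σ̂_{t-1}(x_t)` by `√(T · 2γ / log(1 + σ⁻²))`.
-/

open Finset

lemma gram_eq_matrix_gram (φ : X → H) {t : ℕ} (xs : Fin t → X) :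
    gram φ xs = Matrix.gram ℝ (φ ∘ xs) := rfl

lemma ker_comm (φ : X → H) (a b : X) : ker φ a b = ker φ b a := real_inner_comm _ _

lemma posDef_gram_add_smul_one (φ : X → H) {t : ℕ} (xs : Fin t → X) {σ : ℝ} (hσ : 0 < σ) :
    (gram φ xs + σ ^ 2 • 1).PosDef :=
  Matrix.PosDef.posSemidef_add (Matrix.posSemidef_gram ℝ (φ ∘ xs))
    (Matrix.PosDef.one.smul (by positivity))

lemma gram_add_smul_one_succ (φ : X → H) {n : ℕ} (xs : Fin (n + 1) → X) (σ : ℝ) :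
    (gram φ xs + σ ^ 2 • 1).submatrix finSumFinEquiv finSumFinEquiv =
      Matrix.fromBlocks (gram φ (Fin.init xs) + σ ^ 2 • 1)
        (Matrix.replicateCol (Fin 1) (kvec φ (Fin.init xs) (xs (Fin.last n))))
        (Matrix.replicateRow (Fin 1) (kvec φ (Fin.init xs) (xs (Fin.last n))))
        (Matrix.of fun _ _ => ker φ (xs (Fin.last n)) (xs (Fin.last n)) + σ ^ 2) := by
  have hcast (i : Fin n) : Fin.castAdd 1 i = i.castSucc := rfl
  have hlast (j : Fin 1) : Fin.natAdd n j = Fin.last n := by rw [Fin.fin_one_eq_zero j]; rfl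
  ext (i | i) (j | j) <;>
    simp [_root_.gram, kvec, Fin.init, Matrix.one_apply, hcast, hlast, Fin.castSucc_ne_last,
      (Fin.castSucc_ne_last _).symm]
  exact ker_comm ..

lemma det_gram_add_smul_one_succ (φ : X → H) {n : ℕ} (xs : Fin (n + 1) → X) {σ : ℝ}
    (hσ : 0 < σ) :
    (gram φ xs + σ ^ 2 • 1).det = (gram φ (Fin.init xs) + σ ^ 2 • 1).det *
      (σ ^ 2 + rvarFn σ φ (Fin.init xs) (xs (Fin.last n))) := by
  have := (posDef_gram_add_smul_one φ (Fin.init xs) hσ).isUnit.invertible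
  rw [← Matrix.det_submatrix_equiv_self finSumFinEquiv, gram_add_smul_one_succ,
    Matrix.det_fromBlocks₁₁, Matrix.det_fin_one, Matrix.invOf_eq_nonsing_inv, Matrix.mul_assoc,
    ← Matrix.replicateCol_mulVec]
  simp only [Matrix.sub_apply, Matrix.of_apply, Matrix.replicateRow_mul_replicateCol_apply, rvarFn]
  ring

lemma det_gram_add_smul_one_eq_prod (φ : X → H) {σ : ℝ} (hσ : 0 < σ) :
    ∀ {T : ℕ} (x : Fin T → X),
      (gram φ x + σ ^ 2 • 1).det = ∏ t, (σ ^ 2 + rvarFn σ φ (prevPts x t) (x t))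
  | 0, _ => by simp
  | T + 1, x => by
    rw [det_gram_add_smul_one_succ φ x hσ, det_gram_add_smul_one_eq_prod φ hσ (Fin.init x),
      Fin.prod_univ_castSucc]
    rfl

lemma det_one_add_smul_gram_eq_prod (φ : X → H) {σ : ℝ} (hσ : 0 < σ) {T : ℕ} (x : Fin T → X) :
    (1 + (σ ^ 2)⁻¹ • gram φ x).det = ∏ t, (1 + (σ ^ 2)⁻¹ * rvarFn σ φ (prevPts x t) (x t)) := by
  have hσ2 : σ ^ 2 ≠ 0 := by positivity
  rw [show 1 + (σ ^ 2)⁻¹ • gram φ x = (σ ^ 2)⁻¹ • (gram φ x + σ ^ 2 • 1) by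
      rw [smul_add, smul_smul, inv_mul_cancel₀ hσ2, one_smul, add_comm],
    Matrix.det_smul, det_gram_add_smul_one_eq_prod φ hσ, Fintype.card_fin, ← Fin.prod_const,
    ← Finset.prod_mul_distrib]
  congr! 1 with t
  field_simp

section Posterior

variable (σ : ℝ) (φ : X → H) {t : ℕ} (xs : Fin t → X) (a : X)

def rweightFn : Fin t → ℝ := (gram φ xs + σ ^ 2 • 1)⁻¹ *ᵥ kvec φ xs a

variable {σ}

lemma rmeanFn_eq_inner {w : H} {f : X → ℝ} (hf : ∀ b, f b = ⟪w, φ b⟫) (hσ : 0 < σ) :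
    rmeanFn σ φ f xs a = ⟪w, ∑ i, rweightFn σ φ xs a i • φ (xs i)⟫ := by
  have hsymm : ((gram φ xs + σ ^ 2 • 1)⁻¹)ᵀ = (gram φ xs + σ ^ 2 • 1)⁻¹ :=
    Matrix.isHermitian_iff_isSymm.mp (posDef_gram_add_smul_one φ xs hσ).inv.isHermitian
  rw [rmeanFn, Matrix.dotProduct_mulVec, ← Matrix.mulVec_transpose, hsymm, dotProduct_comm,
    inner_sum]
  simp only [dotProduct, rweightFn, hf, real_inner_smul_right]
  exact Finset.sum_congr rfl fun i _ => mul_comm _ _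

lemma rvarFn_eq (hσ : 0 < σ) :
    rvarFn σ φ xs a = ‖φ a - ∑ i, rweightFn σ φ xs a i • φ (xs i)‖ ^ 2
      + σ ^ 2 * (rweightFn σ φ xs a ⬝ᵥ rweightFn σ φ xs a) := by
  set α := rweightFn σ φ xs a with hα_def
  have hα : (gram φ xs + σ ^ 2 • 1) *ᵥ α = kvec φ xs a := by
    rw [hα_def, rweightFn, Matrix.mulVec_mulVec, Matrix.mul_nonsing_inv _
      ((Matrix.isUnit_iff_isUnit_det _).mp (posDef_gram_add_smul_one φ xs hσ).isUnit),
      Matrix.one_mulVec]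
  have hkα : kvec φ xs a ⬝ᵥ α = α ⬝ᵥ (gram φ xs *ᵥ α) + σ ^ 2 * (α ⬝ᵥ α) := by
    rw [← hα, Matrix.add_mulVec, dotProduct_comm, dotProduct_add, Matrix.smul_mulVec,
      Matrix.one_mulVec, dotProduct_smul, smul_eq_mul]
  have hcross : ⟪φ a, ∑ i, α i • φ (xs i)⟫ = kvec φ xs a ⬝ᵥ α := by
    simp only [inner_sum, real_inner_smul_right, dotProduct, kvec, ker, mul_comm]
  have hsq : ‖∑ i, α i • φ (xs i)‖ ^ 2 = α ⬝ᵥ (gram φ xs *ᵥ α) := by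
    rw [← real_inner_self_eq_norm_sq, ← star_trivial α, gram_eq_matrix_gram,
      Matrix.star_dotProduct_gram_mulVec]
    rfl
  change ker φ a a - kvec φ xs a ⬝ᵥ α = _
  rw [norm_sub_sq_real, hcross, hsq, ker, real_inner_self_eq_norm_sq]
  linarith

lemma norm_sub_sum_le_rsigmaFn (hσ : 0 < σ) :
    ‖φ a - ∑ i, rweightFn σ φ xs a i • φ (xs i)‖ ≤ rsigmaFn σ φ xs a := by
  have := dotProduct_star_self_nonneg (rweightFn σ φ xs a)
  rw [star_trivial] at this
  refine Real.le_sqrt_of_sq_le ?_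
  rw [rvarFn_eq φ xs a hσ]
  exact le_add_of_nonneg_right (by positivity)

lemma abs_sub_rmeanFn_le {w : H} {f : X → ℝ} (hf : ∀ b, f b = ⟪w, φ b⟫) (hσ : 0 < σ) :
    |f a - rmeanFn σ φ f xs a| ≤ ‖w‖ * rsigmaFn σ φ xs a := by
  rw [rmeanFn_eq_inner φ xs a hf hσ, hf, ← inner_sub_right]
  exact (abs_real_inner_le_norm _ _).trans
    (mul_le_mul_of_nonneg_left (norm_sub_sum_le_rsigmaFn φ xs a hσ) (norm_nonneg w))

lemma rvarFn_nonneg (hσ : 0 < σ) : 0 ≤ rvarFn σ φ xs a := by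
  have := dotProduct_star_self_nonneg (rweightFn σ φ xs a)
  rw [star_trivial] at this
  rw [rvarFn_eq φ xs a hσ]
  positivity

lemma sq_rsigmaFn (hσ : 0 < σ) : rsigmaFn σ φ xs a ^ 2 = rvarFn σ φ xs a :=
  Real.sq_sqrt (rvarFn_nonneg φ xs a hσ)

lemma rvarFn_le_ker (hσ : 0 < σ) : rvarFn σ φ xs a ≤ ker φ a a := by
  have := (posDef_gram_add_smul_one φ xs hσ).inv.posSemidef.dotProduct_mulVec_nonneg (kvec φ xs a)
  rw [star_trivial] at this
  exact sub_le_self _ this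

lemma sub_le_two_mul_rsigmaFn {w : H} {f : X → ℝ} (hf : ∀ b, f b = ⟪w, φ b⟫) (hσ : 0 < σ)
    {a b : X} (hucb : rmeanFn σ φ f xs a + ‖w‖ * rsigmaFn σ φ xs a ≤
      rmeanFn σ φ f xs b + ‖w‖ * rsigmaFn σ φ xs b) :
    f a - f b ≤ 2 * ‖w‖ * rsigmaFn σ φ xs b := by
  have ha := (abs_le.mp (abs_sub_rmeanFn_le φ xs a hf hσ)).2
  have hb := (abs_le.mp (abs_sub_rmeanFn_le φ xs b hf hσ)).1
  linarith

end Posterior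

lemma mul_log_one_add_le_log_one_add_mul {c s : ℝ} (hc : -1 < c) (hs₀ : 0 ≤ s) (hs₁ : s ≤ 1) :
    s * Real.log (1 + c) ≤ Real.log (1 + s * c) := by
  have hc' : 0 < 1 + c := by linarith
  rw [← Real.log_rpow hc']
  exact Real.log_le_log (Real.rpow_pos_of_pos hc' s)
    (rpow_one_add_le_one_add_mul_self hc.le hs₀ hs₁)

lemma sum_rvarFn_mul_log_le_log_det (φ : X → H) (hk : ∀ a, ker φ a a ≤ 1) {σ : ℝ} (hσ : 0 < σ)
    {T : ℕ} (x : Fin T → X) :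
    (∑ t, rvarFn σ φ (prevPts x t) (x t)) * Real.log (1 + (σ ^ 2)⁻¹) ≤
      Real.log (1 + (σ ^ 2)⁻¹ • gram φ x).det := by
  have hv₀ t := rvarFn_nonneg φ (prevPts x t) (x t) hσ
  rw [det_one_add_smul_gram_eq_prod φ hσ, Real.log_prod fun t _ =>
    (add_pos_of_pos_of_nonneg one_pos (mul_nonneg (by positivity) (hv₀ t))).ne', Finset.sum_mul]
  refine Finset.sum_le_sum fun t _ => ?_
  rw [mul_comm (σ ^ 2)⁻¹]
  exact mul_log_one_add_le_log_one_add_mul (by linarith [inv_pos.mpr (pow_pos hσ 2)]) (hv₀ t)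
    ((rvarFn_le_ker φ _ _ hσ).trans (hk _))

lemma sum_le_sqrt_card_mul_sum_sq {ι : Type*} (s : Finset ι) (f : ι → ℝ) :
    ∑ i ∈ s, f i ≤ √(#s * ∑ i ∈ s, f i ^ 2) :=
  Real.le_sqrt_of_sq_le sq_sum_le_card_mul_sum_sq

lemma sum_sub_le_two_mul_sqrt_sum_rvarFn (φ : X → H) {w : H} {f : X → ℝ}
    (hf : ∀ b, f b = ⟪w, φ b⟫) {σ : ℝ} (hσ : 0 < σ) {T : ℕ} (x : Fin T → X) (a : X)
    (hucb : ∀ t, rmeanFn σ φ f (prevPts x t) a + ‖w‖ * rsigmaFn σ φ (prevPts x t) a ≤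
      rmeanFn σ φ f (prevPts x t) (x t) + ‖w‖ * rsigmaFn σ φ (prevPts x t) (x t)) :
    ∑ t, (f a - f (x t)) ≤ 2 * ‖w‖ * √(T * ∑ t, rvarFn σ φ (prevPts x t) (x t)) :=
  calc ∑ t, (f a - f (x t))
      ≤ ∑ t, 2 * ‖w‖ * rsigmaFn σ φ (prevPts x t) (x t) :=
        sum_le_sum fun t _ => sub_le_two_mul_rsigmaFn φ _ hf hσ (hucb t)
    _ = 2 * ‖w‖ * ∑ t, rsigmaFn σ φ (prevPts x t) (x t) := (mul_sum ..).symm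
    _ ≤ 2 * ‖w‖ * √(T * ∑ t, rvarFn σ φ (prevPts x t) (x t)) := by
        gcongr
        simpa [sq_rsigmaFn φ _ _ hσ] using
          sum_le_sqrt_card_mul_sum_sq univ fun t => rsigmaFn σ φ (prevPts x t) (x t)

lemma sub_sup'_le_sum_div_card {ι : Type*} {s : Finset ι} (hs : s.Nonempty) (c : ℝ) (g : ι → ℝ) :
    c - s.sup' hs g ≤ (∑ i ∈ s, (c - g i)) / #s := by
  rw [le_div_iff₀ (by exact_mod_cast hs.card_pos), mul_comm, ← nsmul_eq_mul]
  exact Finset.card_nsmul_le_sum _ _ _ fun i hi => sub_le_sub_left (s.le_sup' g hi) c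

lemma sqrt_mul_div_self {a b : ℝ} (ha : 0 < a) : √(a * b) / a = √(b / a) := by
  rw [Real.sqrt_mul ha.le, Real.sqrt_div' _ ha.le]
  nth_rw 2 [← Real.mul_self_sqrt ha.le]
  field_simp

theorem statement_3_general
    (φ : X → H) (w : H) (f : X → ℝ) (hf : ∀ a, f a = ⟪w, φ a⟫)
    (hk : ∀ a b : X, ker φ a b ≤ 1)
    (σ : ℝ) (hσ : 0 < σ)
    (T : ℕ) (hT : 0 < T)
    (xstar : X)
    (x : Fin T → X)
    (hacq : ∀ t : Fin T, ∀ a : X,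
      rmeanFn σ φ f (prevPts x t) a + ‖w‖ * rsigmaFn σ φ (prevPts x t) a ≤
        rmeanFn σ φ f (prevPts x t) (x t) + ‖w‖ * rsigmaFn σ φ (prevPts x t) (x t))
    (γ : ℝ)
    (hγ : (1/2) * Real.log ((1 + (σ^2)⁻¹ • gram φ x).det) ≤ γ) :
    (∑ t : Fin T, (f xstar - f (x t))) ≤
        ‖w‖ * Real.sqrt ((T : ℝ) * (8 / Real.log (1 + (σ^2)⁻¹)) * γ) + 2 * (T : ℝ) * ‖w‖ * σ ∧
    f xstar - (Finset.univ.sup' (Finset.univ_nonempty_iff.mpr (Fin.pos_iff_nonempty.mp hT))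
        fun t => f (x t)) ≤
      ‖w‖ * Real.sqrt ((8 / Real.log (1 + (σ^2)⁻¹)) * γ / (T : ℝ)) + 2 * ‖w‖ * σ := by
  set L := Real.log (1 + (σ ^ 2)⁻¹)
  have hL : 0 < L := Real.log_pos (lt_add_of_pos_right 1 (by positivity))
  have hvar : ∑ t, rvarFn σ φ (prevPts x t) (x t) ≤ 2 * γ / L := by
    rw [le_div_iff₀ hL]
    linarith [sum_rvarFn_mul_log_le_log_det φ (fun a => hk a a) hσ x]
  have hcum : ∑ t, (f xstar - f (x t)) ≤ ‖w‖ * √(T * (8 / L) * γ) :=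
    calc ∑ t, (f xstar - f (x t))
        ≤ 2 * ‖w‖ * √(T * ∑ t, rvarFn σ φ (prevPts x t) (x t)) :=
          sum_sub_le_two_mul_sqrt_sum_rvarFn φ hf hσ x xstar fun t => hacq t xstar
      _ ≤ 2 * ‖w‖ * √(T * (2 * γ / L)) := by gcongr
      _ = ‖w‖ * √(T * (8 / L) * γ) := by
          rw [show T * (8 / L) * γ = 2 ^ 2 * (T * (2 * γ / L)) by ring,
            Real.sqrt_mul (show (0 : ℝ) ≤ 2 ^ 2 by norm_num), Real.sqrt_sq zero_le_two]
          ring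
  refine ⟨hcum.trans (le_add_of_nonneg_right (by positivity)), ?_⟩
  calc f xstar - univ.sup' _ (fun t => f (x t))
      ≤ (∑ t, (f xstar - f (x t))) / T := by
        simpa using sub_sup'_le_sum_div_card (univ_nonempty_iff.mpr (Fin.pos_iff_nonempty.mp hT))
          (f xstar) fun t => f (x t)
    _ ≤ ‖w‖ * √(T * (8 / L) * γ) / T := by gcongr
    _ = ‖w‖ * √(8 / L * γ / T) := by
        rw [mul_div_assoc, mul_assoc, sqrt_mul_div_self (by exact_mod_cast hT)]
    _ ≤ ‖w‖ * √(8 / L * γ / T) + 2 * ‖w‖ * σ := le_add_of_nonneg_right (by positivity)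

/-- Corollary 1 (regret bounds for the regularized algorithm run on noise-free data). -/
theorem statement_3 [Nonempty X]
    (φ : X → H) (w : H) (f : X → ℝ) (hf : ∀ a, f a = ⟪w, φ a⟫)
    (hk : ∀ a b : X, ker φ a b ≤ 1)
    (σ : ℝ) (hσ : 0 < σ)
    (T : ℕ) (hT : 0 < T)
    (xstar : X) (hstar : ∀ a : X, f a ≤ f xstar)
    (x : Fin T → X)
    (hinj : Function.Injective x) (hne : ∀ t : Fin T, x t ≠ xstar)
    (hacq : ∀ t : Fin T, ∀ a : X,
      rmeanFn σ φ f (prevPts x t) a + ‖w‖ * rsigmaFn σ φ (prevPts x t) a ≤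
        rmeanFn σ φ f (prevPts x t) (x t) + ‖w‖ * rsigmaFn σ φ (prevPts x t) (x t))
    (γ : ℝ)
    (hγ : (1/2) * Real.log ((1 + (σ^2)⁻¹ • gram φ x).det) ≤ γ) :
    (∑ t : Fin T, (f xstar - f (x t))) ≤
        ‖w‖ * Real.sqrt ((T : ℝ) * (8 / Real.log (1 + (σ^2)⁻¹)) * γ) + 2 * (T : ℝ) * ‖w‖ * σ ∧
    f xstar - (Finset.univ.sup' (Finset.univ_nonempty_iff.mpr (Fin.pos_iff_nonempty.mp hT))
        fun t => f (x t)) ≤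
      ‖w‖ * Real.sqrt ((8 / Real.log (1 + (σ^2)⁻¹)) * γ / (T : ℝ)) + 2 * ‖w‖ * σ :=
  statement_3_general φ w f hf hk σ hσ T hT xstar x hacq γ hγ
end
end

section
/- Let f(x) = ⟨w, φ(x)⟩ for some w ∈ H, let the first (n−1)L selected points x₁,…,x_{(n−1)L} have invertible Gram matrix, and let x* ∈ X satisfy f(x*) ≥ f(x) for all x ∈ X. Suppose the L-tuple X_n = (x_{(n−1)L+1}, …, x_{nL}) maximizes, over all L-tuples X = (x¹,…,x^L) of points of X, the batch acquisition (1/L)·Σ_{i=1}^L m_{(n−1)L}(xⁱ) + ‖w‖·(2·√(tr(cov_{n−1}(X,X))/L) − √(𝟙ᵀ cov_{n−1}(X,X) 𝟙 / L²)). Then (1/L)·Σ_{i=1}^L (f(x*) − f(x_{(n−1)L+i})) ≤ 2·‖w‖·√(tr(cov_{n−1}(X_n,X_n))/L). -/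
open scoped RealInnerProductSpace
open Matrix

noncomputable section

variable {X : Type*} {H : Type*} [NormedAddCommGroup H] [InnerProductSpace ℝ H]

/-- The mean prediction `m_t(a) = k_t(a)ᵀ K_t⁻¹ (f(x₁),…,f(x_t))ᵀ`. -/
def meanFn (φ : X → H) (f : X → ℝ) {t : ℕ} (xs : Fin t → X) (a : X) : ℝ :=
  kvec φ xs a ⬝ᵥ ((gram φ xs)⁻¹ *ᵥ (fun i => f (xs i)))

/-- The variance `σ_t²(a) = k(a,a) − k_t(a)ᵀ K_t⁻¹ k_t(a)`. -/
def varFn (φ : X → H) {t : ℕ} (xs : Fin t → X) (a : X) : ℝ :=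
  ker φ a a - kvec φ xs a ⬝ᵥ ((gram φ xs)⁻¹ *ᵥ kvec φ xs a)

/-- `σ_t(a) = √(σ_t²(a))`. -/
def sigmaFn (φ : X → H) {t : ℕ} (xs : Fin t → X) (a : X) : ℝ := Real.sqrt (varFn φ xs a)

/-- The noise-free batch covariance matrix `cov(X,X)` after selecting the points `xs`. -/
def covMat (φ : X → H) {t L : ℕ} (xs : Fin t → X) (XX : Fin L → X) :
    Matrix (Fin L) (Fin L) ℝ :=
  Matrix.of fun i j =>
    ker φ (XX i) (XX j) - kvec φ xs (XX i) ⬝ᵥ ((gram φ xs)⁻¹ *ᵥ kvec φ xs (XX j))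

/-- The batch acquisition function:
`(1/L)·Σᵢ m(xⁱ) + w·(2√(tr(cov(X,X))/L) − √(𝟙ᵀ cov(X,X) 𝟙 / L²))`. -/
def batchAcq (φ : X → H) (f : X → ℝ) (wnorm : ℝ) {t L : ℕ} (xs : Fin t → X)
    (XX : Fin L → X) : ℝ :=
  (1 / (L : ℝ)) * ∑ i, meanFn φ f xs (XX i) +
    wnorm * (2 * Real.sqrt ((covMat φ xs XX).trace / (L : ℝ)) -
      Real.sqrt ((∑ i, ∑ j, covMat φ xs XX i j) / (L : ℝ) ^ 2))

/-! Let `r(a)` be the residual of `φ a` after orthogonal projection onto the span of the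
selected features. Then `cov(xⁱ, xʲ) = ⟪r xⁱ, r xʲ⟫` and `f a - m(a) = ⟪w, r a⟫`. By
Cauchy–Schwarz the acquisition of the constant batch `(x*, …, x*)` is at least `f x*`, while the
acquisition of any batch is at most the batch average of `f` plus `2‖w‖√(tr cov / L)`.
Maximality of `Xₙ` chains the two bounds. -/

section Residual

variable (φ : X → H) {t : ℕ} (xs : Fin t → X)

/-- The component of `φ a` orthogonal to the span of the `φ (xs i)`. -/
def kernelResidual (a : X) : H :=
  φ a - ∑ i, ((gram φ xs)⁻¹ *ᵥ kvec φ xs a) i • φ (xs i)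

theorem gram_transpose : (gram φ xs)ᵀ = gram φ xs := by
  ext i j
  simp only [transpose_apply, _root_.gram, ker, of_apply, real_inner_comm]

theorem gram_inv_transpose : ((gram φ xs)⁻¹)ᵀ = (gram φ xs)⁻¹ := by
  rw [transpose_nonsing_inv, gram_transpose]

theorem inner_sum_smul_feature (a : X) (c : Fin t → ℝ) :
    ⟪φ a, ∑ i, c i • φ (xs i)⟫ = kvec φ xs a ⬝ᵥ c := by
  simp only [inner_sum, real_inner_smul_right, dotProduct, kvec, ker, mul_comm]

theorem inner_sum_smul_feature_sum_smul_feature (c d : Fin t → ℝ) :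
    ⟪∑ i, c i • φ (xs i), ∑ j, d j • φ (xs j)⟫ = c ⬝ᵥ (gram φ xs *ᵥ d) := by
  rw [sum_inner]
  simp only [real_inner_smul_left, inner_sum, real_inner_smul_right, dotProduct, mulVec,
    _root_.gram, ker, of_apply, Finset.mul_sum]
  exact Finset.sum_congr rfl fun i _ => Finset.sum_congr rfl fun j _ => by ring

theorem inner_kernelResidual (hinv : IsUnit (gram φ xs).det) (a b : X) :
    ⟪kernelResidual φ xs a, kernelResidual φ xs b⟫ =
      ker φ a b - kvec φ xs a ⬝ᵥ ((gram φ xs)⁻¹ *ᵥ kvec φ xs b) := by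
  have hK : gram φ xs *ᵥ ((gram φ xs)⁻¹ *ᵥ kvec φ xs b) = kvec φ xs b := by
    rw [mulVec_mulVec, mul_nonsing_inv _ hinv, one_mulVec]
  have hsymm : ((gram φ xs)⁻¹ *ᵥ kvec φ xs a) ⬝ᵥ kvec φ xs b =
      kvec φ xs a ⬝ᵥ ((gram φ xs)⁻¹ *ᵥ kvec φ xs b) := by
    rw [dotProduct_mulVec, ← mulVec_transpose, gram_inv_transpose]
  rw [kernelResidual, kernelResidual, inner_sub_left, inner_sub_right, inner_sub_right,
    inner_sum_smul_feature, real_inner_comm (φ b) (∑ i, _), inner_sum_smul_feature,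
    inner_sum_smul_feature_sum_smul_feature, hK, dotProduct_comm (kvec φ xs b), hsymm, ker]
  ring

theorem sub_meanFn_eq_inner_kernelResidual {w : H} {f : X → ℝ} (hf : ∀ a, f a = ⟪w, φ a⟫) (a : X) :
    f a - meanFn φ f xs a = ⟪w, kernelResidual φ xs a⟫ := by
  have hmean : meanFn φ f xs a = ⟪w, ∑ i, ((gram φ xs)⁻¹ *ᵥ kvec φ xs a) i • φ (xs i)⟫ := by
    rw [meanFn, dotProduct_mulVec, ← mulVec_transpose, gram_inv_transpose]
    simp only [inner_sum, real_inner_smul_right, dotProduct, hf, mul_comm]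
  rw [hmean, kernelResidual, inner_sub_right, hf]

variable {φ xs}

theorem covMat_apply (hinv : IsUnit (gram φ xs).det) {L : ℕ} (XX : Fin L → X) (i j : Fin L) :
    covMat φ xs XX i j = ⟪kernelResidual φ xs (XX i), kernelResidual φ xs (XX j)⟫ := by
  rw [covMat, of_apply, inner_kernelResidual φ xs hinv]

theorem trace_covMat (hinv : IsUnit (gram φ xs).det) {L : ℕ} (XX : Fin L → X) :
    (covMat φ xs XX).trace = ∑ i, ‖kernelResidual φ xs (XX i)‖ ^ 2 := by
  simp only [trace, diag, covMat_apply hinv, real_inner_self_eq_norm_sq]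

theorem sum_covMat (hinv : IsUnit (gram φ xs).det) {L : ℕ} (XX : Fin L → X) :
    ∑ i, ∑ j, covMat φ xs XX i j = ‖∑ i, kernelResidual φ xs (XX i)‖ ^ 2 := by
  simp only [covMat_apply hinv, ← real_inner_self_eq_norm_sq, sum_inner, inner_sum]
  exact Finset.sum_comm

end Residual

section Acquisition

variable {φ : X → H} {w : H} {f : X → ℝ} {t L : ℕ} {xs : Fin t → X}

theorem sqrt_sum_covMat_div (hinv : IsUnit (gram φ xs).det) (XX : Fin L → X) :
    Real.sqrt ((∑ i, ∑ j, covMat φ xs XX i j) / (L : ℝ) ^ 2) =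
      ‖∑ i, kernelResidual φ xs (XX i)‖ / L := by
  rw [sum_covMat hinv, ← div_pow, Real.sqrt_sq (by positivity)]

theorem batchAcq_const (hinv : IsUnit (gram φ xs).det) (hL : 0 < L) (c : ℝ) (a : X) :
    batchAcq φ f c xs (fun _ : Fin L => a) = meanFn φ f xs a + c * ‖kernelResidual φ xs a‖ := by
  have hL' : (L : ℝ) ≠ 0 := by positivity
  rw [batchAcq, sqrt_sum_covMat_div hinv, trace_covMat hinv]
  simp only [Finset.sum_const, Finset.card_univ, Fintype.card_fin, RCLike.norm_nsmul ℝ,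
    nsmul_eq_mul]
  rw [mul_div_cancel_left₀ _ hL', mul_div_cancel_left₀ _ hL', Real.sqrt_sq (norm_nonneg _),
    one_div, inv_mul_cancel_left₀ hL']
  ring

theorem le_batchAcq_const (hf : ∀ a, f a = ⟪w, φ a⟫) (hinv : IsUnit (gram φ xs).det)
    (hL : 0 < L) (a : X) : f a ≤ batchAcq φ f ‖w‖ xs (fun _ : Fin L => a) := by
  rw [batchAcq_const hinv hL]
  linarith [sub_meanFn_eq_inner_kernelResidual φ xs hf a, real_inner_le_norm w (kernelResidual φ xs a)]

theorem sum_meanFn_sub_sum_le (hf : ∀ a, f a = ⟪w, φ a⟫) (XX : Fin L → X) :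
    ∑ i, meanFn φ f xs (XX i) - ∑ i, f (XX i) ≤ ‖w‖ * ‖∑ i, kernelResidual φ xs (XX i)‖ :=
  calc ∑ i, meanFn φ f xs (XX i) - ∑ i, f (XX i)
      = -⟪w, ∑ i, kernelResidual φ xs (XX i)⟫ := by
        simp only [inner_sum, ← sub_meanFn_eq_inner_kernelResidual φ xs hf, Finset.sum_sub_distrib]
        ring
    _ ≤ ‖w‖ * ‖∑ i, kernelResidual φ xs (XX i)‖ :=
        (neg_le_abs _).trans (abs_real_inner_le_norm _ _)

/-- The `𝟙ᵀ cov 𝟙` term equals `(‖∑ r‖ / L)²`, so it exactly pays for the error of the mean. -/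
theorem batchAcq_le_average_add (hf : ∀ a, f a = ⟪w, φ a⟫) (hinv : IsUnit (gram φ xs).det)
    (XX : Fin L → X) :
    batchAcq φ f ‖w‖ xs XX ≤
      (1 / (L : ℝ)) * ∑ i, f (XX i) + 2 * ‖w‖ * Real.sqrt ((covMat φ xs XX).trace / L) := by
  have hmean := mul_le_mul_of_nonneg_left (sum_meanFn_sub_sum_le (xs := xs) hf XX)
    (by positivity : (0 : ℝ) ≤ 1 / L)
  rw [batchAcq, sqrt_sum_covMat_div hinv]
  linear_combination hmean

end Acquisition

theorem statement_11_general
    (φ : X → H) (w : H) (f : X → ℝ) (hf : ∀ a, f a = ⟪w, φ a⟫)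
    (n L : ℕ) (hL : 0 < L)
    (xs : Fin ((n - 1) * L) → X) (hinv : IsUnit (gram φ xs).det)
    (xstar : X)
    (Xn : Fin L → X)
    (hacq : ∀ XX : Fin L → X, batchAcq φ f ‖w‖ xs XX ≤ batchAcq φ f ‖w‖ xs Xn) :
    (1 / (L : ℝ)) * ∑ i, (f xstar - f (Xn i)) ≤
      2 * ‖w‖ * Real.sqrt ((covMat φ xs Xn).trace / (L : ℝ)) := by
  have hoptimism := (le_batchAcq_const hf hinv hL xstar).trans (hacq _)
  have hbound := batchAcq_le_average_add hf hinv Xn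
  have haverage : (1 / (L : ℝ)) * ∑ i, (f xstar - f (Xn i)) =
      f xstar - (1 / (L : ℝ)) * ∑ i, f (Xn i) := by
    rw [Finset.sum_sub_distrib, Finset.sum_const, Finset.card_univ, Fintype.card_fin,
      nsmul_eq_mul]
    field_simp
  linarith

/-- Lemma 4: batch per-step regret bound in the noise-free setting. -/
theorem statement_11
    (φ : X → H) (w : H) (f : X → ℝ) (hf : ∀ a, f a = ⟪w, φ a⟫)
    (n L : ℕ) (hL : 0 < L)
    (xs : Fin ((n - 1) * L) → X) (hinv : IsUnit (gram φ xs).det)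
    (xstar : X) (hstar : ∀ a : X, f a ≤ f xstar)
    (Xn : Fin L → X)
    (hacq : ∀ XX : Fin L → X, batchAcq φ f ‖w‖ xs XX ≤ batchAcq φ f ‖w‖ xs Xn) :
    (1 / (L : ℝ)) * ∑ i, (f xstar - f (Xn i)) ≤
      2 * ‖w‖ * Real.sqrt ((covMat φ xs Xn).trace / (L : ℝ)) :=
  statement_11_general φ w f hf n L hL xs hinv xstar Xn hacq
end
end

section
/- Let σ > 0, let x₁, …, x_{t−1} ∈ X be pairwise distinct, let h(x) = ⟨w_h, ψ(x)⟩ for some w_h ∈ H′, let g : X → ℝ satisfy |g(x)| ≤ G·σ for all x with G ≥ 0, set f = h − g, and let x* ∈ X satisfy f(x*) ≥ f(x) for all x ∈ X. If x_t ∈ X maximizes the acquisition function, i.e. m̂_{t−1}(x_t) + ‖w_h‖·σ̂_{t−1}(x_t) ≥ m̂_{t−1}(x) + ‖w_h‖·σ̂_{t−1}(x) for all x ∈ X, and if x* and x_t do not belong to {x₁,…,x_{t−1}}, then f(x*) − f(x_t) ≤ 2·‖w_h‖·σ̂_{t−1}(x_t) + 2·(‖w_h‖ + G)·σ. -/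
open scoped RealInnerProductSpace
open Matrix

noncomputable section

variable {X : Type*} {H : Type*} {H' : Type*}
  [NormedAddCommGroup H] [InnerProductSpace ℝ H]
  [NormedAddCommGroup H'] [InnerProductSpace ℝ H']

/-!
For `a` outside the sample, the noise term of `ψ` makes the Gram matrix of `ψ(x₁), …, ψ(x_t)`
equal to `K_t + σ²I` and leaves `⟪ψ a, ψ xᵢ⟫ = k(a, xᵢ)`, so `m̂_t` and `σ̂_t²` are the
projection data of `ψ a` onto the span of the `ψ xᵢ`: `h(a) − m̂_t(a)` is the inner product of
`w_h` with the residual `r`, and `‖r‖² = σ̂_t²(a) + σ²`. Cauchy–Schwarz gives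
`|h(a) − m̂_t(a)| ≤ ‖w_h‖ (σ̂_t(a) + σ)`; applying this at `x*` and `x_t`, together with
`|g| ≤ Gσ` and the maximality of the acquisition function at `x_t`, gives the bound.
-/

section GramProjection

variable {E : Type*} [NormedAddCommGroup E] [InnerProductSpace ℝ E]
  {ι : Type*} [Fintype ι]

theorem norm_sub_sum_smul_sq (v : E) (u : ι → E) (c : ι → ℝ) :
    ‖v - ∑ i, c i • u i‖ ^ 2 =
      ‖v‖ ^ 2 - 2 * (c ⬝ᵥ fun i => ⟪v, u i⟫) + c ⬝ᵥ (Matrix.gram ℝ u *ᵥ c) := by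
  have hquad : c ⬝ᵥ (Matrix.gram ℝ u *ᵥ c) = ⟪∑ i, c i • u i, ∑ i, c i • u i⟫ := by
    simpa using star_dotProduct_gram_mulVec (𝕜 := ℝ) u c c
  rw [norm_sub_sq_real, hquad, real_inner_self_eq_norm_sq, inner_sum]
  simp only [real_inner_smul_right, dotProduct]

theorem norm_sub_sum_gram_inv_smul_sq [DecidableEq ι] (v : E) (u : ι → E)
    (hu : IsUnit (Matrix.gram ℝ u).det) :
    ‖v - ∑ i, ((Matrix.gram ℝ u)⁻¹ *ᵥ fun j => ⟪v, u j⟫) i • u i‖ ^ 2 =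
      ‖v‖ ^ 2 - (fun i => ⟪v, u i⟫) ⬝ᵥ ((Matrix.gram ℝ u)⁻¹ *ᵥ fun i => ⟪v, u i⟫) := by
  set b : ι → ℝ := fun i => ⟪v, u i⟫
  have hsolve : Matrix.gram ℝ u *ᵥ ((Matrix.gram ℝ u)⁻¹ *ᵥ b) = b := by
    rw [mulVec_mulVec, mul_nonsing_inv _ hu, one_mulVec]
  rw [norm_sub_sum_smul_sq, hsolve, dotProduct_comm b]
  ring

/-- Cauchy–Schwarz against the residual of the orthogonal projection of `v` onto the span
of the `u i`; when the Gram matrix is singular its junk inverse `0` makes this plain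
Cauchy–Schwarz. -/
theorem abs_inner_sub_dotProduct_gram_inv_le [DecidableEq ι] (w v : E) (u : ι → E) :
    |⟪w, v⟫ - (fun i => ⟪v, u i⟫) ⬝ᵥ ((Matrix.gram ℝ u)⁻¹ *ᵥ fun i => ⟪w, u i⟫)| ≤
      ‖w‖ * √(‖v‖ ^ 2 - (fun i => ⟪v, u i⟫) ⬝ᵥ ((Matrix.gram ℝ u)⁻¹ *ᵥ fun i => ⟪v, u i⟫)) := by
  by_cases hu : IsUnit (Matrix.gram ℝ u).det
  · set b : ι → ℝ := fun i => ⟪v, u i⟫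
    set c := (Matrix.gram ℝ u)⁻¹ *ᵥ b
    have hsymm : (Matrix.gram ℝ u)⁻¹ᵀ = (Matrix.gram ℝ u)⁻¹ := (isHermitian_gram ℝ u).inv
    have hresidual : ⟪w, v⟫ - b ⬝ᵥ ((Matrix.gram ℝ u)⁻¹ *ᵥ fun i => ⟪w, u i⟫) =
        ⟪w, v - ∑ i, c i • u i⟫ := by
      rw [dotProduct_mulVec, ← mulVec_transpose, hsymm, inner_sub_right, inner_sum]
      simp only [real_inner_smul_right, dotProduct, c]
    rw [hresidual, ← norm_sub_sum_gram_inv_smul_sq v u hu, Real.sqrt_sq (norm_nonneg _)]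
    exact abs_real_inner_le_norm _ _
  · rw [nonsing_inv_apply_not_isUnit _ hu]
    simpa [Real.sqrt_sq (norm_nonneg v)] using abs_real_inner_le_norm w v

end GramProjection

theorem Real.sqrt_add_sq_le_sqrt_add (x : ℝ) {σ : ℝ} (hσ : 0 ≤ σ) : √(x + σ ^ 2) ≤ √x + σ := by
  rw [Real.sqrt_le_left (by positivity)]
  rcases le_total 0 x with hx | hx
  · nlinarith [Real.sq_sqrt hx, Real.sqrt_nonneg x]
  · nlinarith [Real.sqrt_nonneg x]

section NoisyFeatures

variable [DecidableEq X] {φ : X → H} {ψ : X → H'} {σ : ℝ}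

theorem gram_comp_eq_gram_add_smul_one
    (hker : ∀ a b : X, (⟪ψ a, ψ b⟫ : ℝ) = ⟪φ a, φ b⟫ + σ ^ 2 * (if a = b then 1 else 0))
    {t : ℕ} {xs : Fin t → X} (hinj : Function.Injective xs) :
    Matrix.gram ℝ (ψ ∘ xs) = gram φ xs + σ ^ 2 • 1 := by
  ext i j
  simp [Matrix.gram_apply, hker, _root_.gram, ker, one_apply, hinj.eq_iff]

theorem inner_comp_eq_kvec
    (hker : ∀ a b : X, (⟪ψ a, ψ b⟫ : ℝ) = ⟪φ a, φ b⟫ + σ ^ 2 * (if a = b then 1 else 0))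
    {t : ℕ} {xs : Fin t → X} {a : X} (ha : ∀ i, a ≠ xs i) :
    (fun i => ⟪ψ a, (ψ ∘ xs) i⟫) = kvec φ xs a := by
  ext i
  simp [hker, kvec, ker, ha i]

theorem abs_sub_rmeanFn_le_s16 (hσ : 0 ≤ σ)
    (hker : ∀ a b : X, (⟪ψ a, ψ b⟫ : ℝ) = ⟪φ a, φ b⟫ + σ ^ 2 * (if a = b then 1 else 0))
    {wh : H'} {hfun : X → ℝ} (hh : ∀ a, hfun a = ⟪wh, ψ a⟫)
    {t : ℕ} {xs : Fin t → X} (hinj : Function.Injective xs) {a : X} (ha : ∀ i, a ≠ xs i) :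
    |hfun a - rmeanFn σ φ hfun xs a| ≤ ‖wh‖ * (rsigmaFn σ φ xs a + σ) := by
  have hnorm : ‖ψ a‖ ^ 2 = ker φ a a + σ ^ 2 := by
    rw [← real_inner_self_eq_norm_sq, hker]
    simp [ker]
  have hsample : (fun i => ⟪wh, (ψ ∘ xs) i⟫) = fun i => hfun (xs i) := by
    ext i
    simp [hh]
  have hbound := abs_inner_sub_dotProduct_gram_inv_le wh (ψ a) (ψ ∘ xs)
  rw [gram_comp_eq_gram_add_smul_one hker hinj, inner_comp_eq_kvec hker ha, hsample, hnorm,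
    ← hh, add_sub_right_comm, ← rvarFn, ← rmeanFn] at hbound
  calc |hfun a - rmeanFn σ φ hfun xs a| ≤ ‖wh‖ * √(rvarFn σ φ xs a + σ ^ 2) := hbound
    _ ≤ ‖wh‖ * (rsigmaFn σ φ xs a + σ) :=
      mul_le_mul_of_nonneg_left (Real.sqrt_add_sq_le_sqrt_add _ hσ) (norm_nonneg wh)

end NoisyFeatures

theorem statement_16_general [DecidableEq X]
    (φ : X → H) (ψ : X → H')
    (σ : ℝ) (hσ : 0 < σ)
    (hker : ∀ a b : X, (⟪ψ a, ψ b⟫ : ℝ) = ⟪φ a, φ b⟫ + σ ^ 2 * (if a = b then 1 else 0))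
    (wh : H') (hfun : X → ℝ) (hh : ∀ a, hfun a = ⟪wh, ψ a⟫)
    (g : X → ℝ) (G : ℝ) (hg : ∀ a : X, |g a| ≤ G * σ)
    (f : X → ℝ) (hfdef : ∀ a, f a = hfun a - g a)
    (xstar : X)
    (t : ℕ) (xs : Fin t → X) (hinj : Function.Injective xs)
    (xt : X)
    (hacq : ∀ a : X, rmeanFn σ φ hfun xs a + ‖wh‖ * rsigmaFn σ φ xs a ≤
      rmeanFn σ φ hfun xs xt + ‖wh‖ * rsigmaFn σ φ xs xt)
    (hstar_new : ∀ i : Fin t, xstar ≠ xs i)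
    (hxt_new : ∀ i : Fin t, xt ≠ xs i) :
    f xstar - f xt ≤ 2 * ‖wh‖ * rsigmaFn σ φ xs xt + 2 * (‖wh‖ + G) * σ := by
  have hstar_conf := abs_le.mp (abs_sub_rmeanFn_le_s16 hσ.le hker hh hinj hstar_new)
  have hxt_conf := abs_le.mp (abs_sub_rmeanFn_le_s16 hσ.le hker hh hinj hxt_new)
  have hg_star := abs_le.mp (hg xstar)
  have hg_xt := abs_le.mp (hg xt)
  rw [hfdef, hfdef]
  linarith [hacq xstar]

/-- Lemma 10 (perturbation setting): if `x_t` maximizes the regularized acquisition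
function, then `f(x*) − f(x_t) ≤ 2‖w_h‖·σ̂_{t−1}(x_t) + 2(‖w_h‖ + G)·σ`. -/
theorem statement_16 [DecidableEq X]
    (φ : X → H) (ψ : X → H')
    (σ : ℝ) (hσ : 0 < σ)
    (hker : ∀ a b : X, (⟪ψ a, ψ b⟫ : ℝ) = ⟪φ a, φ b⟫ + σ ^ 2 * (if a = b then 1 else 0))
    (wh : H') (hfun : X → ℝ) (hh : ∀ a, hfun a = ⟪wh, ψ a⟫)
    (g : X → ℝ) (G : ℝ) (hG : 0 ≤ G) (hg : ∀ a : X, |g a| ≤ G * σ)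
    (f : X → ℝ) (hfdef : ∀ a, f a = hfun a - g a)
    (xstar : X) (hstar : ∀ a : X, f a ≤ f xstar)
    (t : ℕ) (xs : Fin t → X) (hinj : Function.Injective xs)
    (xt : X)
    (hacq : ∀ a : X, rmeanFn σ φ hfun xs a + ‖wh‖ * rsigmaFn σ φ xs a ≤
      rmeanFn σ φ hfun xs xt + ‖wh‖ * rsigmaFn σ φ xs xt)
    (hstar_new : ∀ i : Fin t, xstar ≠ xs i)
    (hxt_new : ∀ i : Fin t, xt ≠ xs i) :
    f xstar - f xt ≤ 2 * ‖wh‖ * rsigmaFn σ φ xs xt + 2 * (‖wh‖ + G) * σ :=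
  statement_16_general φ ψ σ hσ hker wh hfun hh g G hg f hfdef xstar t xs hinj xt hacq hstar_new
    hxt_new
end
end
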